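/- arXiv:0712.1615 — 2 statements merged into one kernel-verified Lean document; each statement's English description precedes it below -/
import Mathlib

section
/- For every element w of the Weyl group W, ⟨σ(w), τ(w)⟩ = 0, where σ(w) is the sum of the roots in Φ⁺ ∩ w(Φ⁺), τ(w) is the sum of the roots in Φ⁺ ∩ w(Φ⁻), and ⟨·,·⟩ is the W-invariant inner product. -/
open scoped RealInnerProductSpace
open Classical

noncomputable section

/-- A reduced crystallographic root system in a Euclidean space, with a chosen
set of positive roots and simple roots, together with the reflections of roots. -/
structure RootSystemData (E : Type) [NormedAddCommGroup E] [InnerProductSpace ℝ E]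
    [FiniteDimensional ℝ E] where
  Φ : Finset E
  pos : Finset E
  Δ : Finset E
  zero_notMem : (0 : E) ∉ Φ
  span_eq_top : Submodule.span ℝ (Φ : Set E) = ⊤
  neg_mem : ∀ α ∈ Φ, -α ∈ Φ
  simple_subset : Δ ⊆ pos
  pos_subset : pos ⊆ Φ
  pos_iff : ∀ α ∈ Φ, (α ∈ pos ↔ -α ∉ pos)
  reduced : ∀ α ∈ Φ, ∀ t : ℝ, t • α ∈ Φ → t = 1 ∨ t = -1
  crystallographic : ∀ α ∈ Φ, ∀ β ∈ Φ, ∃ n : ℤ, 2 * ⟪α, β⟫ / ⟪α, α⟫ = (n : ℝ)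
  simple_pos_combo : ∀ β ∈ pos, ∃ c : E → ℕ, β = ∑ a ∈ Δ, (c a : ℝ) • a
  s : E → (E ≃ₗ[ℝ] E)
  s_apply : ∀ α ∈ Φ, ∀ x : E, s α x = x - (2 * ⟪α, x⟫ / ⟪α, α⟫) • α
  s_root_mem : ∀ α ∈ Φ, ∀ β ∈ Φ, s α β ∈ Φ

namespace RootSystemData

variable {E : Type} [NormedAddCommGroup E] [InnerProductSpace ℝ E] [FiniteDimensional ℝ E]
variable (D : RootSystemData E)

/-- The Weyl group, generated by the simple reflections. -/
def W : Subgroup (E ≃ₗ[ℝ] E) := Subgroup.closure { g | ∃ α ∈ D.Δ, g = D.s α }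

/-- The length of a Weyl group element: minimal length of a word in simple reflections. -/
def length (w : E ≃ₗ[ℝ] E) : ℕ :=
  sInf { n | ∃ l : List E, (∀ a ∈ l, a ∈ D.Δ) ∧ l.length = n ∧ (l.map D.s).prod = w }

/-- The set of negative roots, as a subset of `E`. -/
def neg : Set E := (fun x => -x) '' (D.pos : Set E)

/-- `Φ⁺ ∩ w(Φ⁺)`. -/
def sameSet (w : E ≃ₗ[ℝ] E) : Finset E := D.pos.filter (fun β => w.symm β ∈ D.pos)

/-- `Φ⁺ ∩ w(Φ⁻)`. -/
def oppSet (w : E ≃ₗ[ℝ] E) : Finset E := D.pos.filter (fun β => -(w.symm β) ∈ D.pos)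

/-- `σ(w)`, the sum of the roots in `Φ⁺ ∩ w(Φ⁺)`. -/
def σ (w : E ≃ₗ[ℝ] E) : E := ∑ β ∈ D.sameSet w, β

/-- `τ(w)`, the sum of the roots in `Φ⁺ ∩ w(Φ⁻)`. -/
def τ (w : E ≃ₗ[ℝ] E) : E := ∑ β ∈ D.oppSet w, β

/-- `2ρ`, the sum of all positive roots. -/
def twoRho : E := ∑ β ∈ D.pos, β

/-- The pairing `⟨α^∨, x⟩ = 2⟨α,x⟩/⟨α,α⟩` with the coroot of `α`. -/
def copair (α x : E) : ℝ := 2 * ⟪α, x⟫ / ⟪α, α⟫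

/-- The (strict) Bruhat order: the transitive closure of the relation
`x < (s_α) * x` whenever `α` is a root and the length increases. -/
def bruhatLT : (E ≃ₗ[ℝ] E) → (E ≃ₗ[ℝ] E) → Prop :=
  Relation.TransGen (fun x y => (∃ α ∈ D.Φ, y = D.s α * x) ∧ D.length x < D.length y)

end RootSystemData

section Aux

variable {E : Type} [NormedAddCommGroup E] [InnerProductSpace ℝ E] [FiniteDimensional ℝ E]
variable (D : RootSystemData E)

lemma aux_s_inner (α : E) (hα : α ∈ D.Φ) (x y : E) :
    ⟪D.s α x, D.s α y⟫ = ⟪x, y⟫ := by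
  have hα0 : α ≠ 0 := fun h => D.zero_notMem (h ▸ hα)
  have hαα : ⟪α, α⟫ ≠ 0 := fun h => hα0 (inner_self_eq_zero.mp h)
  rw [D.s_apply α hα x, D.s_apply α hα y]
  simp only [inner_sub_left, inner_sub_right, inner_smul_left, inner_smul_right,
    RCLike.conj_to_real]
  field_simp
  ring_nf
  rw [real_inner_comm x α]
  ring

lemma aux_s_invol (α : E) (hα : α ∈ D.Φ) (x : E) : D.s α (D.s α x) = x := by
  have hα0 : α ≠ 0 := fun h => D.zero_notMem (h ▸ hα)
  have hαα : ⟪α, α⟫ ≠ 0 := fun h => hα0 (inner_self_eq_zero.mp h)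
  rw [D.s_apply α hα x, D.s_apply α hα]
  simp only [inner_sub_right, inner_smul_right, smul_smul]
  field_simp
  module

/-- Every element of W preserves the inner product and maps Φ to Φ (both ways). -/
lemma aux_W_props (w : E ≃ₗ[ℝ] E) (hw : w ∈ D.W) :
    (∀ x y : E, ⟪w x, w y⟫ = ⟪x, y⟫) ∧ (∀ β ∈ D.Φ, w β ∈ D.Φ ∧ w.symm β ∈ D.Φ) := by
  induction hw using Subgroup.closure_induction with
  | mem g hg =>
    obtain ⟨α, hα, rfl⟩ := hg
    have hαΦ : α ∈ D.Φ := D.pos_subset (D.simple_subset hα)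
    refine ⟨fun x y => aux_s_inner D α hαΦ x y, fun β hβ => ⟨D.s_root_mem α hαΦ β hβ, ?_⟩⟩
    have : (D.s α).symm β = D.s α β := by
      have := aux_s_invol D α hαΦ β
      calc (D.s α).symm β = (D.s α).symm (D.s α (D.s α β)) := by rw [this]
        _ = D.s α β := (D.s α).symm_apply_apply _
    rw [this]; exact D.s_root_mem α hαΦ β hβ
  | one => exact ⟨fun x y => rfl, fun β hβ => ⟨hβ, hβ⟩⟩
  | mul u v hu hv ihu ihv =>
    refine ⟨fun x y => ?_, fun β hβ => ⟨?_, ?_⟩⟩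
    · have : (u * v) x = u (v x) := rfl
      rw [this, show (u * v) y = u (v y) from rfl, ihu.1, ihv.1]
    · exact (ihu.2 _ (ihv.2 β hβ).1).1
    · exact (ihv.2 _ (ihu.2 β hβ).2).2
  | inv u hu ihu =>
    refine ⟨fun x y => ?_, fun β hβ => ⟨(ihu.2 β hβ).2, ?_⟩⟩
    · have := ihu.1 (u⁻¹ x) (u⁻¹ y)
      have h1 : u (u⁻¹ x) = x := u.apply_symm_apply x
      have h2 : u (u⁻¹ y) = y := u.apply_symm_apply y
      rw [h1, h2] at this; exact this.symm
    · have : (u⁻¹ : E ≃ₗ[ℝ] E).symm = u := rfl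
      rw [this]; exact (ihu.2 β hβ).1

end Aux

theorem inner_sigma_tau_eq_zero {E : Type} [NormedAddCommGroup E] [InnerProductSpace ℝ E]
    [FiniteDimensional ℝ E] (D : RootSystemData E)
    (w : E ≃ₗ[ℝ] E) (hw : w ∈ D.W) :
    ⟪ D.σ w, D.τ w ⟫ = 0 := by
  classical
  obtain ⟨hinner, hroots⟩ := aux_W_props D w hw
  have hWΦ : ∀ β ∈ D.Φ, w β ∈ D.Φ := fun β hβ => (hroots β hβ).1
  have hWΦ' : ∀ β ∈ D.Φ, w.symm β ∈ D.Φ := fun β hβ => (hroots β hβ).2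
  set a := D.twoRho with ha
  set b := w D.twoRho with hb
  have hsum : D.σ w + D.τ w = a := by
    rw [RootSystemData.σ, RootSystemData.τ, RootSystemData.sameSet, RootSystemData.oppSet]
    have hfe : D.pos.filter (fun β => -(w.symm β) ∈ D.pos)
        = D.pos.filter (fun β => ¬ (w.symm β ∈ D.pos)) := by
      apply Finset.filter_congr
      intro β hβ
      have hβΦ : w.symm β ∈ D.Φ := hWΦ' β (D.pos_subset hβ)
      have h1 := D.pos_iff _ (D.neg_mem _ hβΦ)
      simp only [neg_neg] at h1
      simp [h1]
    rw [hfe, Finset.sum_filter_add_sum_filter_not]; rfl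
  have hdiff : D.σ w - D.τ w = b := by
    have hsplit : b = (∑ γ ∈ D.pos.filter (fun γ => w γ ∈ D.pos), w γ)
        + ∑ γ ∈ D.pos.filter (fun γ => ¬ (w γ ∈ D.pos)), w γ := by
      rw [hb, RootSystemData.twoRho, map_sum, Finset.sum_filter_add_sum_filter_not]
    have h1 : ∑ γ ∈ D.pos.filter (fun γ => w γ ∈ D.pos), w γ = D.σ w := by
      rw [RootSystemData.σ, RootSystemData.sameSet]
      apply Finset.sum_nbij' (i := fun γ => w γ) (j := fun β => w.symm β)
      · intro γ hγ
        simp only [Finset.mem_filter] at hγ ⊢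
        exact ⟨hγ.2, by rw [w.symm_apply_apply]; exact hγ.1⟩
      · intro β hβ
        simp only [Finset.mem_filter] at hβ ⊢
        exact ⟨hβ.2, by rw [w.apply_symm_apply]; exact hβ.1⟩
      · intro γ _; exact w.symm_apply_apply γ
      · intro β _; exact w.apply_symm_apply β
      · intro γ _; rfl
    have h2 : ∑ γ ∈ D.pos.filter (fun γ => ¬ (w γ ∈ D.pos)), w γ = - D.τ w := by
      have key : ∑ γ ∈ D.pos.filter (fun γ => ¬ (w γ ∈ D.pos)), -(w γ) = D.τ w := by
        rw [RootSystemData.τ, RootSystemData.oppSet]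
        apply Finset.sum_nbij' (i := fun γ => -(w γ)) (j := fun β => -(w.symm β))
        · intro γ hγ
          simp only [Finset.mem_filter] at hγ ⊢
          have hγΦ : w γ ∈ D.Φ := hWΦ γ (D.pos_subset hγ.1)
          have h1 := D.pos_iff _ (D.neg_mem _ hγΦ)
          simp only [neg_neg] at h1
          constructor
          · exact h1.mpr hγ.2
          · rw [map_neg, w.symm_apply_apply, neg_neg]; exact hγ.1
        · intro β hβ
          simp only [Finset.mem_filter] at hβ ⊢
          refine ⟨hβ.2, ?_⟩
          intro hcon
          rw [map_neg, w.apply_symm_apply] at hcon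
          have hβΦ : β ∈ D.Φ := D.pos_subset hβ.1
          exact (D.pos_iff _ (D.neg_mem _ hβΦ)).mp hcon (by simpa using hβ.1)
        · intro γ _; rw [map_neg, w.symm_apply_apply, neg_neg]
        · intro β _; rw [map_neg, w.apply_symm_apply, neg_neg]
        · intro γ _; rfl
      calc ∑ γ ∈ D.pos.filter (fun γ => ¬ (w γ ∈ D.pos)), w γ
          = - ∑ γ ∈ D.pos.filter (fun γ => ¬ (w γ ∈ D.pos)), -(w γ) := by
            rw [← Finset.sum_neg_distrib]; simp
        _ = - D.τ w := by rw [key]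
    rw [hsplit, h1, h2]; abel
  have e1 : a + b = (2:ℝ) • D.σ w := by rw [← hsum, ← hdiff]; module
  have e2 : a - b = (2:ℝ) • D.τ w := by rw [← hsum, ← hdiff]; module
  have hbb : ⟪b, b⟫ = ⟪a, a⟫ := hinner a a
  have h4 : (4:ℝ) * ⟪D.σ w, D.τ w⟫ = ⟪a + b, a - b⟫ := by
    rw [e1, e2, real_inner_smul_left, real_inner_smul_right]; ring
  have h5 : ⟪a + b, a - b⟫ = ⟪a,a⟫ - ⟪a,b⟫ + ⟪b,a⟫ - ⟪b,b⟫ := by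
    simp [inner_add_left, inner_sub_right]; ring
  rw [h5, hbb, real_inner_comm a b] at h4
  linarith
end
end

section
/- For every w ∈ W, ⟨σ(w), 2ρ⟩ = ⟨σ(w), σ(w)⟩, where σ(w) is the sum of roots in Φ⁺ ∩ w(Φ⁺) and 2ρ is the sum of all positive roots. -/
open scoped RealInnerProductSpace
open Classical

noncomputable section

/-!
Since every `w ∈ W` permutes `Φ`, each positive root `β` has `w⁻¹β` either positive or negative,
so `σ(w) + τ(w) = 2ρ`. As `w⁻¹` maps `Φ⁺ ∩ w(Φ⁺)` onto `Φ⁺ ∩ w⁻¹(Φ⁺)` and `-w⁻¹` maps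
`Φ⁺ ∩ w(Φ⁻)` onto `Φ⁺ ∩ w⁻¹(Φ⁻)`, we get `σ(w⁻¹) = w⁻¹σ(w)` and `τ(w⁻¹) = -w⁻¹τ(w)`, hence the isometry `w⁻¹` sends `σ(w) - τ(w)` to `σ(w) + τ(w)`.
Equal norms force `⟪σ(w), τ(w)⟫ = 0`, and then `⟪σ(w), 2ρ⟫ = ⟪σ(w), σ(w) + τ(w)⟫ = ‖σ(w)‖²`.
-/

open scoped Pointwise

theorem real_inner_eq_zero_of_map_sub_eq_add {E : Type*} [NormedAddCommGroup E]
    [InnerProductSpace ℝ E] {f : E → E} (hf : ∀ x y, ⟪f x, f y⟫ = ⟪x, y⟫) {a b : E}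
    (h : f (a - b) = a + b) : ⟪a, b⟫ = 0 := by
  have hnorm := hf (a - b) (a - b)
  rw [h, real_inner_add_add_self, real_inner_sub_sub_self] at hnorm
  linarith

namespace RootSystemData

variable {E : Type} [NormedAddCommGroup E] [InnerProductSpace ℝ E] [FiniteDimensional ℝ E]
variable (D : RootSystemData E)

theorem inner_s_apply_s_apply {α : E} (hα : α ∈ D.Φ) (x y : E) :
    ⟪D.s α x, D.s α y⟫ = ⟪x, y⟫ := by
  have hαα : ⟪α, α⟫ ≠ 0 := by
    rw [Ne, inner_self_eq_zero]
    exact fun h => D.zero_notMem (h ▸ hα)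
  rw [D.s_apply α hα x, D.s_apply α hα y]
  simp only [inner_sub_left, inner_sub_right, real_inner_smul_left, real_inner_smul_right,
    real_inner_comm α x]
  field_simp
  ring

theorem inner_apply_apply_of_mem_W {w : E ≃ₗ[ℝ] E} (hw : w ∈ D.W) (x y : E) :
    ⟪w x, w y⟫ = ⟪x, y⟫ := by
  induction hw using Subgroup.closure_induction generalizing x y with
  | mem g hg =>
    obtain ⟨α, hα, rfl⟩ := hg
    exact D.inner_s_apply_s_apply (D.pos_subset (D.simple_subset hα)) x y
  | one => rfl
  | mul g h _ _ hg hh => exact (hg (h x) (h y)).trans (hh x y)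
  | inv g _ hg =>
    simpa only [LinearEquiv.coe_inv, LinearEquiv.apply_symm_apply] using
      (hg (g.symm x) (g.symm y)).symm

theorem W_le_stabilizer_Φ : D.W ≤ MulAction.stabilizer (E ≃ₗ[ℝ] E) (D.Φ : Set E) := by
  refine (Subgroup.closure_le _).mpr ?_
  rintro _ ⟨α, hα, rfl⟩
  have hαΦ : α ∈ D.Φ := D.pos_subset (D.simple_subset hα)
  have hmaps : Set.MapsTo (D.s α) D.Φ D.Φ := fun β hβ => D.s_root_mem α hαΦ β hβ
  have hbij := (D.Φ.finite_toSet.injOn_iff_bijOn_of_mapsTo hmaps).mp (D.s α).injective.injOn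
  rw [SetLike.mem_coe, MulAction.mem_stabilizer_iff, ← Set.image_smul]
  exact hbij.image_eq

theorem apply_mem_Φ_of_mem_W {w : E ≃ₗ[ℝ] E} (hw : w ∈ D.W) {α : E} (hα : α ∈ D.Φ) :
    w α ∈ D.Φ := by
  have hstab : w • (D.Φ : Set E) = D.Φ :=
    MulAction.mem_stabilizer_iff.mp (D.W_le_stabilizer_Φ hw)
  rw [← Finset.mem_coe, ← hstab]
  exact Set.smul_mem_smul_set hα

theorem neg_mem_pos_iff {γ : E} (hγ : γ ∈ D.Φ) : -γ ∈ D.pos ↔ γ ∉ D.pos := by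
  rw [D.pos_iff γ hγ, not_not]

theorem oppSet_eq_filter_notMem {w : E ≃ₗ[ℝ] E} (hw : w ∈ D.W) :
    D.oppSet w = D.pos.filter (fun β => w.symm β ∉ D.pos) :=
  Finset.filter_congr fun _ hβ =>
    D.neg_mem_pos_iff (D.apply_mem_Φ_of_mem_W (inv_mem hw) (D.pos_subset hβ))

theorem σ_add_τ_eq_twoRho {w : E ≃ₗ[ℝ] E} (hw : w ∈ D.W) : D.σ w + D.τ w = D.twoRho := by
  rw [σ, τ, twoRho, sameSet, D.oppSet_eq_filter_notMem hw]
  exact Finset.sum_filter_add_sum_filter_not _ _ _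

theorem σ_inv (w : E ≃ₗ[ℝ] E) : D.σ w⁻¹ = w.symm (D.σ w) := by
  rw [σ, σ, map_sum]
  refine (Finset.sum_equiv w.symm.toEquiv (fun β => ?_) fun _ _ => rfl).symm
  have hsymm : w⁻¹.symm = w := rfl
  simp [sameSet, hsymm, and_comm]

theorem τ_inv (w : E ≃ₗ[ℝ] E) : D.τ w⁻¹ = -w.symm (D.τ w) := by
  rw [τ, τ, map_sum, ← Finset.sum_neg_distrib]
  refine (Finset.sum_equiv (w.symm.toEquiv.trans (Equiv.neg E)) (fun β => ?_)
    fun _ _ => rfl).symm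
  have hsymm : w⁻¹.symm = w := rfl
  simp [oppSet, hsymm, and_comm]

theorem inner_σ_τ_eq_zero {w : E ≃ₗ[ℝ] E} (hw : w ∈ D.W) : ⟪D.σ w, D.τ w⟫ = 0 := by
  refine real_inner_eq_zero_of_map_sub_eq_add (D.inner_apply_apply_of_mem_W (inv_mem hw)) ?_
  rw [map_sub, LinearEquiv.coe_inv, ← D.σ_inv, sub_eq_add_neg, ← D.τ_inv,
    D.σ_add_τ_eq_twoRho (inv_mem hw), D.σ_add_τ_eq_twoRho hw]

end RootSystemData

theorem inner_sigma_twoRho_eq_inner_sigma_self {E : Type} [NormedAddCommGroup E] [InnerProductSpace ℝ E]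
    [FiniteDimensional ℝ E] (D : RootSystemData E)
    (w : E ≃ₗ[ℝ] E) (hw : w ∈ D.W) :
    ⟪ D.σ w, D.twoRho ⟫ = ⟪ D.σ w, D.σ w ⟫ := by
  rw [← D.σ_add_τ_eq_twoRho hw, inner_add_right, D.inner_σ_τ_eq_zero hw, add_zero]
end
end
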